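/- Let F = F_p G be a product of differentiable invertible 3×3 matrix-valued functions, with Ḟ = L F and Ġ = L_p G. Set B_p = F_p F_pᵀ, C_p = F_pᵀ F_p, and D_p = (L_p + L_pᵀ)/2. Then Ḃ_p = L B_p + B_p Lᵀ − 2 F_p D_p F_pᵀ. -/

import Mathlib

/-!
Cancelling the invertible factor `G` in the product rule for `F = Fp G` gives
`Ḟp = L Fp - Fp Lp`. The product rule for `Bp = Fp Fpᵀ` then gives
`Ḃp = L Bp + Bp Lᵀ - Fp (Lp + Lpᵀ) Fpᵀ`, which is the claim.
-/

open Matrix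

namespace Matrix

variable {𝕜 : Type*} [NontriviallyNormedField 𝕜] {l m n : Type*}

theorem hasDerivAt_mul_apply [Fintype m] {A : 𝕜 → Matrix l m 𝕜} {B : 𝕜 → Matrix m n 𝕜}
    {A' : Matrix l m 𝕜} {B' : Matrix m n 𝕜} {t : 𝕜}
    (hA : ∀ i j, HasDerivAt (fun s => A s i j) (A' i j) t)
    (hB : ∀ i j, HasDerivAt (fun s => B s i j) (B' i j) t) (i : l) (j : n) :
    HasDerivAt (fun s => (A s * B s) i j) ((A' * B t + A t * B') i j) t := by
  simp only [mul_apply, add_apply, ← Finset.sum_add_distrib]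
  exact HasDerivAt.fun_sum fun k _ => (hA i k).mul (hB k j)

theorem hasDerivAt_mul_transpose_apply [Fintype n] {A : 𝕜 → Matrix m n 𝕜} {A' : Matrix m n 𝕜}
    {t : 𝕜} (hA : ∀ i j, HasDerivAt (fun s => A s i j) (A' i j) t) (i j : m) :
    HasDerivAt (fun s => (A s * (A s)ᵀ) i j) ((A' * (A t)ᵀ + A t * A'ᵀ) i j) t :=
  hasDerivAt_mul_apply (B := fun s => (A s)ᵀ) hA (fun i j => hA j i) i j

theorem eq_sub_of_hasDerivAt_mul_apply [Fintype n] [DecidableEq n] {Fp G : 𝕜 → Matrix n n 𝕜}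
    {Fp' L Lp : Matrix n n 𝕜} {t : 𝕜} (hGunit : IsUnit (G t))
    (hFp : ∀ i j, HasDerivAt (fun s => Fp s i j) (Fp' i j) t)
    (hG : ∀ i j, HasDerivAt (fun s => G s i j) ((Lp * G t) i j) t)
    (hF : ∀ i j, HasDerivAt (fun s => (Fp s * G s) i j) ((L * (Fp t * G t)) i j) t) :
    Fp' = L * Fp t - Fp t * Lp := by
  have hprod : Fp' * G t + Fp t * (Lp * G t) = L * (Fp t * G t) := by
    ext i j
    exact (hasDerivAt_mul_apply hFp hG i j).unique (hF i j)
  have hcancel : (Fp' + Fp t * Lp) * G t = (L * Fp t) * G t := by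
    simpa only [add_mul, mul_assoc] using hprod
  exact eq_sub_of_add_eq (hGunit.mul_left_inj.mp hcancel)

theorem mul_mul_transpose_add_sub_two_nsmul_symm_part {K n : Type*} [Field K] [NeZero (2 : K)]
    [Fintype n] (F L Lp : Matrix n n K) :
    L * (F * Fᵀ) + F * Fᵀ * Lᵀ - 2 • (F * ((1 / 2 : K) • (Lp + Lpᵀ)) * Fᵀ)
      = (L * F - F * Lp) * Fᵀ + F * (L * F - F * Lp)ᵀ := by
  rw [Matrix.mul_smul, Matrix.smul_mul, ← Nat.cast_smul_eq_nsmul K, smul_smul, Nat.cast_ofNat,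
    mul_one_div_cancel two_ne_zero, one_smul, transpose_sub, transpose_mul, transpose_mul]
  noncomm_ring

end Matrix

theorem natural_configuration_evolution_general
    (Fp G L Lp : ℝ → Matrix (Fin 3) (Fin 3) ℝ)
    (hGinv : ∀ t : ℝ, IsUnit (G t))
    (hFp : ∀ (t : ℝ) (i j : Fin 3), DifferentiableAt ℝ (fun s => Fp s i j) t)
    (hG : ∀ (t : ℝ) (i j : Fin 3), HasDerivAt (fun s => G s i j) ((Lp t * G t) i j) t)
    (hF : ∀ (t : ℝ) (i j : Fin 3),
        HasDerivAt (fun s => (Fp s * G s) i j) ((L t * (Fp t * G t)) i j) t)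
    (Bp : ℝ → Matrix (Fin 3) (Fin 3) ℝ) (hBp : ∀ t, Bp t = Fp t * (Fp t)ᵀ)
    (Dp : ℝ → Matrix (Fin 3) (Fin 3) ℝ) (hDp : ∀ t, Dp t = (1 / 2 : ℝ) • (Lp t + (Lp t)ᵀ))
    (t : ℝ) (i j : Fin 3) :
    HasDerivAt (fun s => Bp s i j)
      ((L t * Bp t + Bp t * (L t)ᵀ - 2 • (Fp t * Dp t * (Fp t)ᵀ)) i j) t := by
  obtain ⟨Fp', hFp'⟩ : ∃ Fp' : Matrix (Fin 3) (Fin 3) ℝ,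
      ∀ i j, HasDerivAt (fun s => Fp s i j) (Fp' i j) t :=
    ⟨of fun i j => deriv (fun s => Fp s i j) t, fun i j => (hFp t i j).hasDerivAt⟩
  have hvel : Fp' = L t * Fp t - Fp t * Lp t :=
    eq_sub_of_hasDerivAt_mul_apply (hGinv t) hFp' (hG t) (hF t)
  simp only [hBp, hDp]
  rw [mul_mul_transpose_add_sub_two_nsmul_symm_part, ← hvel]
  exact hasDerivAt_mul_transpose_apply hFp' i j

/-- with `F = F_p G`, `Ḟ = L F`, `Ġ = L_p G`, `B_p = F_p F_pᵀ`,
`D_p = (L_p + L_pᵀ)/2`, one has `Ḃ_p = L B_p + B_p Lᵀ − 2 F_p D_p F_pᵀ`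
(entrywise derivatives). -/
theorem natural_configuration_evolution
    (Fp G L Lp : ℝ → Matrix (Fin 3) (Fin 3) ℝ)
    (hFpinv : ∀ t : ℝ, IsUnit (Fp t)) (hGinv : ∀ t : ℝ, IsUnit (G t))
    (hFp : ∀ (t : ℝ) (i j : Fin 3), DifferentiableAt ℝ (fun s => Fp s i j) t)
    (hG : ∀ (t : ℝ) (i j : Fin 3), HasDerivAt (fun s => G s i j) ((Lp t * G t) i j) t)
    (hF : ∀ (t : ℝ) (i j : Fin 3),
        HasDerivAt (fun s => (Fp s * G s) i j) ((L t * (Fp t * G t)) i j) t)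
    (Bp : ℝ → Matrix (Fin 3) (Fin 3) ℝ) (hBp : ∀ t, Bp t = Fp t * (Fp t)ᵀ)
    (Dp : ℝ → Matrix (Fin 3) (Fin 3) ℝ) (hDp : ∀ t, Dp t = (1 / 2 : ℝ) • (Lp t + (Lp t)ᵀ))
    (t : ℝ) (i j : Fin 3) :
    HasDerivAt (fun s => Bp s i j)
      ((L t * Bp t + Bp t * (L t)ᵀ - 2 • (Fp t * Dp t * (Fp t)ᵀ)) i j) t :=
  natural_configuration_evolution_general Fp G L Lp hGinv hFp hG hF Bp hBp Dp hDp t i j
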